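/- Let (a_{i,j})_{i,j≥1} be a family of even integers and let f = 1 + Σ_{i,j≥1} a_{i,j} U^i T^j be the corresponding formal power series in two variables over ℤ. Then there exists a unique family of integers (b_{i,j})_{i,j≥1} such that f = Π_{i,j≥1} ((1 − U^i T^j)·(1 + U^i T^j)^{-1})^{b_{i,j}}, coefficientwise: for all m, n ≥ 1, the coefficient of U^m T^n in the finite product Π_{1≤i≤m, 1≤j≤n} ((1 − U^i T^j)·(1 + U^i T^j)^{-1})^{b_{i,j}} equals a_{m,n}. -/

import Mathlib

/-- Integer power of an element of a monoid with zero: for units this agrees with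
the `zpow` in the unit group; negative exponents use `Ring.inverse`. -/
noncomputable def ringZpow {R : Type*} [MonoidWithZero R] (f : R) (n : ℤ) : R :=
  if 0 ≤ n then f ^ n.toNat else Ring.inverse f ^ (-n).toNat

/-- The coefficient of `U^m T^n` in `ℤ⟦U,T⟧ = MvPowerSeries (Fin 2) ℤ`, `U = X 0`, `T = X 1`. -/
noncomputable def coeffUT (m n : ℕ) : MvPowerSeries (Fin 2) ℤ →ₗ[ℤ] ℤ :=
  MvPowerSeries.coeff (R := ℤ) (Finsupp.single (0 : Fin 2) m + Finsupp.single (1 : Fin 2) n)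

/-- The factor `(1 - U^i T^j) · (1 + U^i T^j)⁻¹` in `ℤ⟦U,T⟧`. -/
noncomputable def minusOverPlusUT (i j : ℕ) : MvPowerSeries (Fin 2) ℤ :=
  (1 - MvPowerSeries.X (0 : Fin 2) ^ i * MvPowerSeries.X (1 : Fin 2) ^ j) *
    Ring.inverse (1 + MvPowerSeries.X (0 : Fin 2) ^ i * MvPowerSeries.X (1 : Fin 2) ^ j)

/-!
Write `s = U^m T^n`. Modulo `s²` the factor `(1 - s)(1 + s)⁻¹` is `1 - 2s`, so its `c`-th power is
`1 - 2cs`. As every other factor has constant coefficient `1`, the coefficient of `s` in the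
product over `[1, m] × [1, n]` is that of the product with the corner `(m, n)` removed, minus
`2 b_{m,n}`. That coefficient only involves the `b_{i,j}` with `i + j < m + n`, and it is even since
every factor is `≡ 1 (mod 2)`. So `b_{m,n}` is determined by recursion on `m + n`, and it is an
integer because `a_{m,n}` is even.
-/

open MvPowerSeries Finset

section RingZpow

variable {M N F : Type*} [MonoidWithZero M] [MonoidWithZero N] [FunLike F M N]
  [MonoidHomClass F M N]

lemma map_ringInverse (f : F) {a : M} (ha : IsUnit a) :
    f (Ring.inverse a) = Ring.inverse (f a) := by
  have h : f a * f (Ring.inverse a) = 1 := by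
    rw [← map_mul, Ring.mul_inverse_cancel a ha, map_one]
  simpa using ((Ring.inverse_mul_eq_iff_eq_mul _ 1 _ (ha.map f)).2 h.symm).symm

lemma map_ringZpow (f : F) {a : M} (ha : IsUnit a) (c : ℤ) :
    f (ringZpow a c) = ringZpow (f a) c := by
  unfold ringZpow
  split_ifs <;> simp [map_ringInverse f ha]

lemma ringZpow_one (c : ℤ) : ringZpow (1 : M) c = 1 := by
  unfold ringZpow
  split_ifs <;> simp

end RingZpow

section SquareZero

variable {R : Type*} [CommRing R] {ε : R}

lemma one_add_pow_of_sq_eq_zero (hε : ε ^ 2 = 0) (k : ℕ) : (1 + ε) ^ k = 1 + k * ε := by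
  induction k with
  | zero => simp
  | succ k ih =>
    rw [pow_succ, ih]
    push_cast
    linear_combination (k : R) * hε

lemma ringInverse_one_add_of_sq_eq_zero (hε : ε ^ 2 = 0) : Ring.inverse (1 + ε) = 1 - ε := by
  have h : (1 + ε) * (1 - ε) = 1 := by linear_combination -hε
  simpa using (Ring.inverse_mul_eq_iff_eq_mul _ 1 _ (IsUnit.of_mul_eq_one _ h)).2 h.symm

lemma ringZpow_one_add_of_sq_eq_zero (hε : ε ^ 2 = 0) (c : ℤ) :
    ringZpow (1 + ε) c = 1 + c * ε := by
  unfold ringZpow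
  split_ifs with hc
  · rw [one_add_pow_of_sq_eq_zero hε, ← Int.cast_natCast, Int.toNat_of_nonneg hc]
  · rw [ringInverse_one_add_of_sq_eq_zero hε, sub_eq_add_neg,
      one_add_pow_of_sq_eq_zero (by rwa [neg_sq]), ← Int.cast_natCast,
      Int.toNat_of_nonneg (by omega)]
    push_cast
    ring

end SquareZero

section MinusOverPlus

variable {R : Type*} [CommRing R] {s : R}

noncomputable def minusOverPlus (s : R) : R := (1 - s) * Ring.inverse (1 + s)

lemma isUnit_minusOverPlus (hplus : IsUnit (1 + s)) (hminus : IsUnit (1 - s)) :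
    IsUnit (minusOverPlus s) :=
  hminus.mul hplus.ringInverse

lemma map_ringZpow_minusOverPlus_eq_one {S F : Type*} [CommRing S] [FunLike F R S]
    [RingHomClass F R S] (f : F) (hplus : IsUnit (1 + s)) (hminus : IsUnit (1 - s))
    (hf : f (1 - s) = f (1 + s)) (c : ℤ) : f (ringZpow (minusOverPlus s) c) = 1 := by
  rw [map_ringZpow f (isUnit_minusOverPlus hplus hminus), minusOverPlus, map_mul,
    map_ringInverse f hplus, hf, Ring.mul_inverse_cancel _ (hplus.map f), ringZpow_one]

lemma mk_ringZpow_minusOverPlus (hplus : IsUnit (1 + s)) (hminus : IsUnit (1 - s)) (c : ℤ) :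
    Ideal.Quotient.mk (Ideal.span {s ^ 2}) (ringZpow (minusOverPlus s) c) =
      Ideal.Quotient.mk (Ideal.span {s ^ 2}) (1 - 2 * c * s) := by
  set π := Ideal.Quotient.mk (Ideal.span {s ^ 2})
  have hε : π s ^ 2 = 0 := by
    rw [← map_pow, Ideal.Quotient.eq_zero_iff_mem]
    exact Ideal.mem_span_singleton_self _
  have hπ : π (minusOverPlus s) = 1 + -2 * π s := by
    rw [minusOverPlus, map_mul, map_ringInverse π hplus, map_add, map_sub, map_one,
      ringInverse_one_add_of_sq_eq_zero hε]
    linear_combination hε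
  rw [map_ringZpow π (isUnit_minusOverPlus hplus hminus), hπ,
    ringZpow_one_add_of_sq_eq_zero (by linear_combination 4 * hε)]
  simp only [map_sub, map_mul, map_one, map_ofNat, map_intCast]
  ring

end MinusOverPlus

section PowerSeries

variable {σ R : Type*} [CommRing R] {e : σ →₀ ℕ}

lemma constantCoeff_monomial_one (he : e ≠ 0) : constantCoeff (monomial e (1 : R)) = 0 := by
  classical
  rw [← coeff_zero_eq_constantCoeff_apply, coeff_monomial, if_neg he.symm]

lemma isUnit_one_add_monomial (he : e ≠ 0) : IsUnit (1 + monomial e (1 : R)) := by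
  simp [isUnit_iff_constantCoeff, constantCoeff_monomial_one he]

lemma isUnit_one_sub_monomial (he : e ≠ 0) : IsUnit (1 - monomial e (1 : R)) := by
  simp [isUnit_iff_constantCoeff, constantCoeff_monomial_one he]

lemma coeff_eq_of_sub_mem_span_sq (he : e ≠ 0) {x y : MvPowerSeries σ R}
    (h : x - y ∈ Ideal.span {monomial e (1 : R) ^ 2}) : coeff e x = coeff e y := by
  obtain ⟨g, hg⟩ := Ideal.mem_span_singleton'.1 h
  rw [← sub_eq_zero, ← map_sub, ← hg, monomial_pow, one_pow, coeff_mul_monomial, if_neg]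
  simpa [two_nsmul] using he

lemma coeff_mul_ringZpow_minusOverPlus (he : e ≠ 0) (Q : MvPowerSeries σ R) (c : ℤ) :
    coeff e (Q * ringZpow (minusOverPlus (monomial e 1)) c) =
      coeff e Q - 2 * c * constantCoeff Q := by
  have hmk := mk_ringZpow_minusOverPlus (s := monomial e (1 : R)) (isUnit_one_add_monomial he)
    (isUnit_one_sub_monomial he) c
  rw [coeff_eq_of_sub_mem_span_sq he (y := Q * (1 - 2 * (c : MvPowerSeries σ R) * monomial e 1)), mul_sub, mul_one,
    map_sub]
  · have : Q * (2 * (c : MvPowerSeries σ R) * monomial e 1) = C (2 * c : R) * (Q * monomial e 1) := by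
      rw [map_mul, map_ofNat, map_intCast]
      ring
    rw [this, coeff_C_mul, coeff_mul_monomial, if_pos le_rfl, tsub_self,
      coeff_zero_eq_constantCoeff_apply, mul_one, mul_comm]
  · rw [← mul_sub]
    exact Ideal.mul_mem_left _ _ (Ideal.Quotient.eq.1 hmk)

lemma constantCoeff_prod_ringZpow_minusOverPlus {ι : Type*} (S : Finset ι) (d : ι → σ →₀ ℕ)
    (hd : ∀ p ∈ S, d p ≠ 0) (c : ι → ℤ) :
    constantCoeff (∏ p ∈ S, ringZpow (minusOverPlus (monomial (d p) (1 : R))) (c p)) = 1 := by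
  rw [map_prod]
  refine prod_eq_one fun p hp => map_ringZpow_minusOverPlus_eq_one _
    (isUnit_one_add_monomial (hd p hp)) (isUnit_one_sub_monomial (hd p hp)) ?_ (c p)
  simp [constantCoeff_monomial_one (hd p hp)]

end PowerSeries

lemma even_coeff_prod_ringZpow_minusOverPlus {σ ι : Type*} {e : σ →₀ ℕ} (he : e ≠ 0)
    (S : Finset ι) (d : ι → σ →₀ ℕ) (hd : ∀ p ∈ S, d p ≠ 0) (c : ι → ℤ) :
    Even (coeff e (∏ p ∈ S, ringZpow (minusOverPlus (monomial (d p) (1 : ℤ))) (c p))) := by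
  classical
  set φ := MvPowerSeries.map (σ := σ) (Int.castRingHom (ZMod 2))
  have hφ : φ (∏ p ∈ S, ringZpow (minusOverPlus (monomial (d p) (1 : ℤ))) (c p)) = 1 := by
    rw [map_prod]
    refine prod_eq_one fun p hp => map_ringZpow_minusOverPlus_eq_one φ
      (isUnit_one_add_monomial (hd p hp)) (isUnit_one_sub_monomial (hd p hp)) ?_ (c p)
    ext n
    simp [φ, CharTwo.sub_eq_add]
  have := congrArg (coeff e) hφ
  rwa [coeff_map, coeff_one, if_neg he, eq_intCast, ZMod.intCast_eq_zero_iff_even] at this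

section Grid

noncomputable def expUT (i j : ℕ) : Fin 2 →₀ ℕ := Finsupp.single 0 i + Finsupp.single 1 j

lemma expUT_ne_zero {i j : ℕ} (hi : 1 ≤ i) : expUT i j ≠ 0 := by
  intro h
  have := congrArg (· 0) h
  simp [expUT] at this
  omega

lemma coeffUT_apply (m n : ℕ) (f : MvPowerSeries (Fin 2) ℤ) :
    coeffUT m n f = coeff (expUT m n) f :=
  rfl

lemma minusOverPlusUT_eq (i j : ℕ) :
    minusOverPlusUT i j = minusOverPlus (monomial (expUT i j) 1) := by
  rw [minusOverPlusUT, X_pow_eq, X_pow_eq, monomial_mul_monomial, one_mul]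
  rfl

noncomputable def gridProd (b : ℕ → ℕ → ℤ) (m n : ℕ) : MvPowerSeries (Fin 2) ℤ :=
  ∏ i ∈ Icc 1 m, ∏ j ∈ Icc 1 n, ringZpow (minusOverPlusUT i j) (b i j)

noncomputable def puncturedGridProd (b : ℕ → ℕ → ℤ) (m n : ℕ) : MvPowerSeries (Fin 2) ℤ :=
  ∏ q ∈ (Icc 1 m ×ˢ Icc 1 n).erase (m, n), ringZpow (minusOverPlusUT q.1 q.2) (b q.1 q.2)

lemma one_le_of_mem_puncturedGrid {m n : ℕ} {q : ℕ × ℕ}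
    (hq : q ∈ (Icc 1 m ×ˢ Icc 1 n).erase (m, n)) : 1 ≤ q.1 := by
  simp only [mem_erase, mem_product, mem_Icc] at hq
  exact hq.2.1.1

lemma puncturedGridProd_congr {b b' : ℕ → ℕ → ℤ} {m n : ℕ}
    (h : ∀ i j, 1 ≤ i → 1 ≤ j → i + j < m + n → b i j = b' i j) :
    puncturedGridProd b m n = puncturedGridProd b' m n := by
  refine prod_congr rfl fun q hq => ?_
  simp only [mem_erase, ne_eq, Prod.ext_iff, mem_product, mem_Icc] at hq
  rw [h q.1 q.2 hq.2.1.1 hq.2.2.1 (by omega)]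

lemma coeffUT_gridProd (b : ℕ → ℕ → ℤ) {m n : ℕ} (hm : 1 ≤ m) (hn : 1 ≤ n) :
    coeffUT m n (gridProd b m n) = coeffUT m n (puncturedGridProd b m n) - 2 * b m n := by
  have hmem : (m, n) ∈ Icc 1 m ×ˢ Icc 1 n := by simp [hm, hn]
  rw [gridProd, ← prod_product', ← mul_prod_erase _ _ hmem, mul_comm, coeffUT_apply,
    minusOverPlusUT_eq, coeff_mul_ringZpow_minusOverPlus (expUT_ne_zero hm), puncturedGridProd]
  simp only [minusOverPlusUT_eq]
  rw [constantCoeff_prod_ringZpow_minusOverPlus _ _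
    fun q hq => expUT_ne_zero (one_le_of_mem_puncturedGrid hq), mul_one, Int.cast_id,
    coeffUT_apply]

lemma even_coeffUT_puncturedGridProd (b : ℕ → ℕ → ℤ) {m : ℕ} (hm : 1 ≤ m) (n : ℕ) :
    Even (coeffUT m n (puncturedGridProd b m n)) := by
  rw [puncturedGridProd]
  simp only [minusOverPlusUT_eq]
  exact even_coeff_prod_ringZpow_minusOverPlus (expUT_ne_zero hm) _ _
    (fun q hq => expUT_ne_zero (one_le_of_mem_puncturedGrid hq)) _

lemma eq_of_coeffUT_gridProd_eq {b b' : ℕ → ℕ → ℤ}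
    (h : ∀ m n, 1 ≤ m → 1 ≤ n → coeffUT m n (gridProd b m n) = coeffUT m n (gridProd b' m n)) :
    ∀ m n, 1 ≤ m → 1 ≤ n → b m n = b' m n := by
  intro m n
  induction hk : m + n using Nat.strong_induction_on generalizing m n with
  | _ k ih =>
    intro hm hn
    have hpunct : puncturedGridProd b m n = puncturedGridProd b' m n :=
      puncturedGridProd_congr fun i j hi hj hij => ih _ (hk ▸ hij) i j rfl hi hj
    have hcoeff := h m n hm hn
    rw [coeffUT_gridProd b hm hn, coeffUT_gridProd b' hm hn, hpunct] at hcoeff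
    omega

/-- The guard only lets the recursion see earlier corners; the division by `2` is exact by
`even_coeffUT_puncturedGridProd`. -/
noncomputable def liftExponents (a : ℕ → ℕ → ℤ) (m n : ℕ) : ℤ :=
  (coeffUT m n (puncturedGridProd
      (fun i j => if i + j < m + n then liftExponents a i j else 0) m n) - a m n) / 2
termination_by m + n

lemma liftExponents_eq (a : ℕ → ℕ → ℤ) (m n : ℕ) :
    liftExponents a m n = (coeffUT m n (puncturedGridProd (liftExponents a) m n) - a m n) / 2 := by
  rw [liftExponents, puncturedGridProd_congr fun i j _ _ hij => if_pos hij]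

lemma coeffUT_gridProd_liftExponents {a : ℕ → ℕ → ℤ}
    (ha : ∀ i j : ℕ, 1 ≤ i → 1 ≤ j → Even (a i j)) {m n : ℕ} (hm : 1 ≤ m) (hn : 1 ≤ n) :
    coeffUT m n (gridProd (liftExponents a) m n) = a m n := by
  rw [coeffUT_gridProd _ hm hn, liftExponents_eq a m n]
  obtain ⟨x, hx⟩ := even_coeffUT_puncturedGridProd (liftExponents a) hm n
  obtain ⟨y, hy⟩ := ha m n hm hn
  omega

end Grid

/-- Lemma 3.2 (qTransform2): given a family of even integers `(a_{i,j})_{i,j ≥ 1}`, there exists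
a unique family of integers `(b_{i,j})_{i,j ≥ 1}` such that
`1 + Σ a_{i,j} U^i T^j = ∏_{i,j ≥ 1} ((1 - U^i T^j)(1 + U^i T^j)⁻¹)^{b_{i,j}}`
coefficientwise: for all `m, n ≥ 1` the coefficient of `U^m T^n` in the finite product
`∏_{1 ≤ i ≤ m} ∏_{1 ≤ j ≤ n} ((1 - U^i T^j)(1 + U^i T^j)⁻¹)^{b_{i,j}}` equals `a_{m,n}`. -/
theorem statement4 (a : ℕ → ℕ → ℤ) (ha : ∀ i j : ℕ, 1 ≤ i → 1 ≤ j → Even (a i j)) :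
    ∃ b : ℕ → ℕ → ℤ,
      (∀ m n : ℕ, 1 ≤ m → 1 ≤ n →
        coeffUT m n
          (∏ i ∈ Finset.Icc 1 m, ∏ j ∈ Finset.Icc 1 n,
            ringZpow (minusOverPlusUT i j) (b i j)) = a m n) ∧
      (∀ b' : ℕ → ℕ → ℤ,
        (∀ m n : ℕ, 1 ≤ m → 1 ≤ n →
          coeffUT m n
            (∏ i ∈ Finset.Icc 1 m, ∏ j ∈ Finset.Icc 1 n,
              ringZpow (minusOverPlusUT i j) (b' i j)) = a m n) →
        ∀ i j : ℕ, 1 ≤ i → 1 ≤ j → b' i j = b i j) := by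
  have hlift : ∀ m n, 1 ≤ m → 1 ≤ n → coeffUT m n (gridProd (liftExponents a) m n) = a m n :=
    fun m n hm hn => coeffUT_gridProd_liftExponents ha hm hn
  refine ⟨liftExponents a, hlift, fun b' hb' => ?_⟩
  exact eq_of_coeffUT_gridProd_eq fun m n hm hn => (hb' m n hm hn).trans (hlift m n hm hn).symm
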